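/- For a fixed positive definite X and probability measure μ with finite first moment, the map t ↦ X #_t μ from ℝ to the 1-Wasserstein space is locally Lipschitz: for every T > 0 there is C_T > 0 with d₁^W(X #_t μ, X #_s μ) ≤ C_T|t−s| for all t, s ∈ [−T, T]. -/

import Mathlib

open MeasureTheory
open scoped ComplexOrder

abbrev Mat (m : ℕ) := Matrix (Fin m) (Fin m) ℂ

noncomputable instance {m : ℕ} : MeasurableSpace (Mat m) := borel _
instance {m : ℕ} : BorelSpace (Mat m) := ⟨rfl⟩

/-- Functional calculus on Hermitian matrices (junk value `A` otherwise). -/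
noncomputable def matFun {m : ℕ} (f : ℝ → ℝ) (A : Mat m) : Mat m :=
  if h : A.IsHermitian then
    (h.eigenvectorUnitary : Mat m) *
      Matrix.diagonal (fun i => (f (h.eigenvalues i) : ℂ)) *
      star (h.eigenvectorUnitary : Mat m)
  else A

/-- Real power `A^t` of a positive definite matrix, via the spectral decomposition. -/
noncomputable def mpow {m : ℕ} (A : Mat m) (t : ℝ) : Mat m := matFun (fun x => x ^ t) A

/-- Logarithm of a positive definite matrix, via the spectral decomposition. -/
noncomputable def mlog {m : ℕ} (A : Mat m) : Mat m := matFun Real.log A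

/-- The operator norm of a matrix (acting on the Euclidean space). -/
noncomputable def opN {m : ℕ} (A : Mat m) : ℝ :=
  ‖(Matrix.toEuclideanCLM (𝕜 := ℂ) A : EuclideanSpace ℂ (Fin m) →L[ℂ] EuclideanSpace ℂ (Fin m))‖

/-- The Frobenius (Hilbert-Schmidt) norm of a matrix. -/
noncomputable def fnorm {m : ℕ} (A : Mat m) : ℝ :=
  Real.sqrt (∑ i, ∑ j, ‖A i j‖ ^ 2)

/-- The Riemannian trace metric distance `d(A,B) = ‖log (A^{-1/2} B A^{-1/2})‖₂`. -/
noncomputable def rdist {m : ℕ} (A B : Mat m) : ℝ :=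
  fnorm (mlog (mpow A (-(1/2 : ℝ)) * B * mpow A (-(1/2 : ℝ))))

/-- The `t`-weighted geometric mean `X #_t A = X^{1/2} (X^{-1/2} A X^{-1/2})^t X^{1/2}`. -/
noncomputable def geom {m : ℕ} (X : Mat m) (t : ℝ) (A : Mat m) : Mat m :=
  mpow X (1/2 : ℝ) * mpow (mpow X (-(1/2 : ℝ)) * A * mpow X (-(1/2 : ℝ))) t * mpow X (1/2 : ℝ)

/-- Finite first moment for a measure on positive definite matrices. -/
def HasFFM {m : ℕ} (μ : Measure (Mat m)) : Prop :=
  ∃ Y : Mat m, Y.PosDef ∧ Integrable (fun A => rdist A Y) μ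

/-- Couplings of two probability measures. -/
def couplings {m : ℕ} (μ ν : Measure (Mat m)) : Set (Measure (Mat m × Mat m)) :=
  {π | IsProbabilityMeasure π ∧ π.map Prod.fst = μ ∧ π.map Prod.snd = ν}

/-- The 1-Wasserstein distance with respect to the Riemannian trace metric. -/
noncomputable def W1 {m : ℕ} (μ ν : Measure (Mat m)) : ℝ :=
  sInf ((fun π : Measure (Mat m × Mat m) => ∫ p, rdist p.1 p.2 ∂π) '' couplings μ ν)


/-!
Write `B = X^{-1/2} A X^{-1/2}`, so that `X #_t A = X^{1/2} B^t X^{1/2}`. The matrix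
`W = (X #_t A)^{-1/2} X^{1/2} B^{t/2}` is unitary and conjugates `B^{s-t}` into
`(X #_t A)^{-1/2} (X #_s A) (X #_t A)^{-1/2}`. Since the logarithm commutes with unitary
conjugation and the Frobenius norm is unitarily invariant, `d(X #_t A, X #_s A) = |t - s| d(X, A)`.
Coupling `X #_t μ` with `X #_s μ` through `A ↦ (X #_t A, X #_s A)` then gives
`d₁^W(X #_t μ, X #_s μ) ≤ |t - s| ∫ d(X, A) dμ(A)`.
-/

open Matrix

section

variable {m : ℕ}

section FunctionalCalculus

variable {A : Mat m}

lemma Matrix.PosDef.pos_of_mem_spectrum (hA : A.PosDef) {x : ℝ} (hx : x ∈ spectrum ℝ A) :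
    0 < x := by
  obtain ⟨i, rfl⟩ := hA.isHermitian.spectrum_real_eq_range_eigenvalues ▸ hx
  exact hA.eigenvalues_pos i

lemma Matrix.PosDef.mul_mul_self {S C : Mat m} (hC : C.PosDef) (hS : S.IsHermitian)
    (hSu : IsUnit S) : (S * C * S).PosDef := by
  simpa only [star_eq_conjTranspose, hS.eq] using
    (Matrix.IsUnit.posDef_star_left_conjugate_iff hSu).mpr hC

lemma matFun_eq_cfc (hA : A.IsHermitian) (f : ℝ → ℝ) : matFun f A = cfc f A := by
  rw [hA.cfc_eq, IsHermitian.cfc, Unitary.conjStarAlgAut_apply, matFun, dif_pos hA]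
  rfl

lemma posDef_matFun (hA : A.IsHermitian) {f : ℝ → ℝ} (hf : ∀ i, 0 < f (hA.eigenvalues i)) :
    (matFun f A).PosDef := by
  have hD : (diagonal fun i => (f (hA.eigenvalues i) : ℂ)).PosDef :=
    PosDef.diagonal fun i => Complex.zero_lt_real.mpr (hf i)
  have hU : IsUnit (star (hA.eigenvectorUnitary : Mat m)) :=
    (Unitary.toUnits (star hA.eigenvectorUnitary)).isUnit
  rw [matFun, dif_pos hA]
  simpa only [star_star] using (Matrix.IsUnit.posDef_star_left_conjugate_iff hU).mpr hD

lemma matFun_unitary_conj {U : Mat m} (hU : U ∈ unitary (Mat m)) (hA : A.IsHermitian)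
    (f : ℝ → ℝ) : matFun f (U * A * star U) = U * matFun f A * star U := by
  have hUA : (U * A * star U).IsHermitian := isHermitian_mul_mul_conjTranspose U hA
  have hφ : Continuous (Unitary.conjStarAlgAut ℝ (Mat m) ⟨U, hU⟩) := by
    change Continuous fun B : Mat m => U * B * star U
    fun_prop
  have := StarAlgHomClass.map_cfc (S := ℝ) (Unitary.conjStarAlgAut ℝ (Mat m) ⟨U, hU⟩) f A
    (A.finite_real_spectrum.continuousOn f) hφ hA.isSelfAdjoint
  rw [matFun_eq_cfc hUA, matFun_eq_cfc hA]
  simpa only [Unitary.conjStarAlgAut_apply] using this.symm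

lemma isHermitian_mpow (hA : A.IsHermitian) (t : ℝ) : (mpow A t).IsHermitian := by
  rw [mpow, matFun_eq_cfc hA]
  exact cfc_predicate _ A

lemma posDef_mpow (hA : A.PosDef) (t : ℝ) : (mpow A t).PosDef :=
  posDef_matFun hA.isHermitian fun i => Real.rpow_pos_of_pos (hA.eigenvalues_pos i) t

lemma mpow_zero (hA : A.IsHermitian) : mpow A 0 = 1 := by
  rw [mpow, matFun_eq_cfc hA]
  simp only [Real.rpow_zero]
  exact cfc_const_one ℝ A

lemma mpow_one (hA : A.IsHermitian) : mpow A 1 = A := by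
  rw [mpow, matFun_eq_cfc hA]
  simp only [Real.rpow_one]
  exact cfc_id' ℝ A

lemma mpow_add (hA : A.PosDef) (a b : ℝ) : mpow A a * mpow A b = mpow A (a + b) := by
  simp only [mpow, matFun_eq_cfc hA.isHermitian]
  rw [← cfc_mul _ _ A (A.finite_real_spectrum.continuousOn _)
    (A.finite_real_spectrum.continuousOn _)]
  exact cfc_congr fun x hx => (Real.rpow_add (hA.pos_of_mem_spectrum hx) a b).symm

lemma mpow_neg_half_mul_self_mul (hA : A.PosDef) :
    mpow A (-(1/2)) * A * mpow A (-(1/2)) = 1 := by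
  nth_rw 2 [← mpow_one hA.isHermitian]
  rw [mpow_add hA, mpow_add hA]
  norm_num [mpow_zero hA.isHermitian]

lemma mlog_mpow (hA : A.PosDef) (r : ℝ) : mlog (mpow A r) = r • mlog A := by
  have hs := A.finite_real_spectrum
  rw [mlog, matFun_eq_cfc (isHermitian_mpow hA.isHermitian r), mpow, mlog,
    matFun_eq_cfc hA.isHermitian, matFun_eq_cfc hA.isHermitian,
    ← cfc_comp' Real.log (fun x : ℝ => x ^ r) A ((hs.image _).continuousOn _)
      (hs.continuousOn _) hA.isHermitian.isSelfAdjoint,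
    ← cfc_smul r Real.log A (hs.continuousOn _)]
  exact cfc_congr fun x hx => Real.log_rpow (hA.pos_of_mem_spectrum hx) r

end FunctionalCalculus

section FrobeniusNorm

lemma fnorm_nonneg (A : Mat m) : 0 ≤ fnorm A := Real.sqrt_nonneg _

lemma fnorm_eq_sqrt_re_trace (A : Mat m) : fnorm A = √(Aᴴ * A).trace.re := by
  rw [fnorm, trace, Complex.re_sum, Finset.sum_comm]
  congr 1
  refine Finset.sum_congr rfl fun j _ => ?_
  rw [diag_apply, mul_apply, Complex.re_sum]
  refine Finset.sum_congr rfl fun i _ => ?_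
  rw [conjTranspose_apply, Complex.star_def, mul_comm, Complex.mul_conj, Complex.normSq_eq_norm_sq]
  norm_cast

lemma fnorm_unitary_conj {U : Mat m} (hU : U ∈ unitary (Mat m)) (A : Mat m) :
    fnorm (U * A * star U) = fnorm A := by
  have hUU : Uᴴ * U = 1 := Unitary.star_mul_self_of_mem hU
  have : (U * A * Uᴴ)ᴴ * (U * A * Uᴴ) = U * (Aᴴ * A) * Uᴴ := by
    simp only [conjTranspose_mul, conjTranspose_conjTranspose, mul_assoc]
    rw [← mul_assoc Uᴴ U, hUU, one_mul]
  rw [star_eq_conjTranspose, fnorm_eq_sqrt_re_trace, fnorm_eq_sqrt_re_trace, this,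
    trace_mul_cycle, hUU, one_mul]

lemma fnorm_smul (r : ℝ) (A : Mat m) : fnorm (r • A) = |r| * fnorm A := by
  simp only [fnorm, Matrix.smul_apply, norm_smul, mul_pow, ← Finset.mul_sum, Real.norm_eq_abs,
    sq_abs]
  rw [Real.sqrt_mul (sq_nonneg r), Real.sqrt_sq_eq_abs]

end FrobeniusNorm

theorem rdist_geom_geom {X A : Mat m} (hX : X.PosDef) (hA : A.PosDef) (t s : ℝ) :
    rdist (geom X t A) (geom X s A) = |t - s| * rdist X A := by
  set Xh := mpow X (1/2)
  set Xm := mpow X (-(1/2))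
  set B := Xm * A * Xm
  have hXh : Xh.IsHermitian := isHermitian_mpow hX.isHermitian _
  have hB : B.PosDef :=
    hA.mul_mul_self (isHermitian_mpow hX.isHermitian _) (posDef_mpow hX _).isUnit
  have hBh (r : ℝ) : (mpow B r).IsHermitian := isHermitian_mpow hB.isHermitian r
  set P := geom X t A
  have hP : P.PosDef := (posDef_mpow hB t).mul_mul_self hXh (posDef_mpow hX _).isUnit
  set Pm := mpow P (-(1/2))
  have hPm : Pm.IsHermitian := isHermitian_mpow hP.isHermitian _
  set W := Pm * Xh * mpow B (t / 2)
  have hWstar : star W = mpow B (t / 2) * Xh * Pm := by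
    simp only [W, star_mul, star_eq_conjTranspose, (hBh _).eq, hXh.eq, hPm.eq, mul_assoc]
  have hW : W ∈ unitary (Mat m) := by
    refine mem_unitaryGroup_iff.mpr ?_
    calc W * star W = Pm * (Xh * (mpow B (t / 2) * mpow B (t / 2)) * Xh) * Pm := by
          rw [hWstar]; simp only [W, mul_assoc]
      _ = Pm * P * Pm := by rw [mpow_add hB, add_halves]; rfl
      _ = 1 := mpow_neg_half_mul_self_mul hP
  have hconj : Pm * geom X s A * Pm = W * mpow B (s - t) * star W := by
    have hsplit : mpow B (t / 2) * mpow B (s - t) * mpow B (t / 2) = mpow B s := by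
      rw [mpow_add hB, mpow_add hB]
      ring_nf
    calc Pm * geom X s A * Pm
        = Pm * (Xh * (mpow B (t / 2) * mpow B (s - t) * mpow B (t / 2)) * Xh) * Pm := by
          rw [hsplit]; rfl
      _ = W * mpow B (s - t) * star W := by rw [hWstar]; simp only [W, mul_assoc]
  calc rdist P (geom X s A) = fnorm (mlog (W * mpow B (s - t) * star W)) := by
        rw [rdist, hconj]
    _ = |s - t| * fnorm (mlog B) := by
        rw [mlog, matFun_unitary_conj hW (hBh _), fnorm_unitary_conj hW, ← mlog,
          mlog_mpow hB, fnorm_smul]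
    _ = |t - s| * rdist X A := by rw [abs_sub_comm]; rfl

lemma W1_map_le_integral {μ : Measure (Mat m)} [IsProbabilityMeasure μ] {f g : Mat m → Mat m}
    (hf : AEMeasurable f μ) (hg : AEMeasurable g μ) :
    W1 (μ.map f) (μ.map g) ≤ ∫ A, rdist (f A) (g A) ∂μ := by
  have hfg : AEMeasurable (fun A => (f A, g A)) μ := hf.prodMk hg
  set π := μ.map fun A => (f A, g A)
  have hπ : π ∈ couplings (μ.map f) (μ.map g) :=
    ⟨Measure.isProbabilityMeasure_map hfg,
      AEMeasurable.map_map_of_aemeasurable measurable_fst.aemeasurable hfg,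
      AEMeasurable.map_map_of_aemeasurable measurable_snd.aemeasurable hfg⟩
  have hbdd :
      BddBelow ((fun π => ∫ p, rdist p.1 p.2 ∂π) '' couplings (μ.map f) (μ.map g)) :=
    ⟨0, by rintro _ ⟨_, _, rfl⟩; exact integral_nonneg fun p => fnorm_nonneg _⟩
  refine (csInf_le hbdd ⟨π, hπ, rfl⟩).trans ?_
  dsimp only
  by_cases hd : AEStronglyMeasurable (fun p : Mat m × Mat m => rdist p.1 p.2) π
  · exact (integral_map hfg hd).le
  · rw [integral_non_aestronglyMeasurable hd]
    exact integral_nonneg fun A => fnorm_nonneg _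

end

theorem stmt13_general {m : ℕ} (X : Mat m) (hX : X.PosDef) (μ : Measure (Mat m))
    (hμ : IsProbabilityMeasure μ) (hμpos : ∀ᵐ A ∂μ, A.PosDef)
    (hmeas : ∀ t : ℝ, AEMeasurable (geom X t) μ) :
    ∀ T : ℝ, 0 < T → ∃ C : ℝ, 0 < C ∧
      ∀ t ∈ Set.Icc (-T) T, ∀ s ∈ Set.Icc (-T) T,
        W1 (μ.map (geom X t)) (μ.map (geom X s)) ≤ C * |t - s| := by
  intro T _
  refine ⟨max (∫ A, rdist X A ∂μ) 1, by positivity, fun t _ s _ => ?_⟩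
  calc W1 (μ.map (geom X t)) (μ.map (geom X s))
      ≤ ∫ A, rdist (geom X t A) (geom X s A) ∂μ := W1_map_le_integral (hmeas t) (hmeas s)
    _ = ∫ A, |t - s| * rdist X A ∂μ :=
        integral_congr_ae (hμpos.mono fun A hA => rdist_geom_geom hX hA t s)
    _ = (∫ A, rdist X A ∂μ) * |t - s| := by rw [integral_const_mul, mul_comm]
    _ ≤ max (∫ A, rdist X A ∂μ) 1 * |t - s| := by gcongr; exact le_max_left _ _

/-- The map `t ↦ X #_t μ` is locally Lipschitz for the 1-Wasserstein distance. -/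
theorem stmt13 {m : ℕ} (X : Mat m) (hX : X.PosDef) (μ : Measure (Mat m))
    (hμ : IsProbabilityMeasure μ) (hμpos : ∀ᵐ A ∂μ, A.PosDef) (hμffm : HasFFM μ)
    (hmeas : ∀ t : ℝ, AEMeasurable (geom X t) μ) :
    ∀ T : ℝ, 0 < T → ∃ C : ℝ, 0 < C ∧
      ∀ t ∈ Set.Icc (-T) T, ∀ s ∈ Set.Icc (-T) T,
        W1 (μ.map (geom X t)) (μ.map (geom X s)) ≤ C * |t - s| :=
  stmt13_general X hX μ hμ hμpos hmeas
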